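/- arXiv:2402.14716 — 2 statements merged into one kernel-verified Lean document; each statement's English description precedes it below -/
import Mathlib

section
/- The improper-proper observability Gramian Q_ip := ∫₀^∞ F_J(t)^T·M·P_i·M·F_J(t) dt is well defined and solves the projected continuous-time Lyapunov equation E^T·Q_ip·A + A^T·Q_ip·E = −P_r^T·M·P_i·M·P_r together with the projection condition Q_ip = P_l^T·Q_ip·P_l. -/
/-!
Write `G := M P_i M` and `L(t) := F_J(t) E`. Because `W⁻¹ W = 1` and `exp(tJ)` solves `Φ' = Φ J`,
`L' = F_J A`, and `Eᵀ F_J(t)ᵀ G F_J(t) E = L(t)ᵀ G L(t)`; hence the integrand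
`Eᵀ (F_Jᵀ G F_J) A + Aᵀ (F_Jᵀ G F_J) E` is the derivative of `L(t)ᵀ G L(t)`. The entries of `F_J`
decay like `exp(-αt)`, so those of `L(t)ᵀ G L(t)` vanish at infinity and the Gramian integrand is
integrable, while `L(0) = P_r`: the fundamental theorem of calculus on `(0, ∞)` gives the Lyapunov
equation. The projection identity is `F_J(t) P_l = F_J(t)`.
-/


open MeasureTheory Matrix

/-- The matrix exponential of a real square matrix. -/
noncomputable def mexp {d : ℕ} (X : Matrix (Fin d) (Fin d) ℝ) : Matrix (Fin d) (Fin d) ℝ :=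
  NormedSpace.exp X

/-- The operator norm on real matrices, induced by the Euclidean (`ℓ²`) norms. -/
noncomputable def opNorm {d e : ℕ} (X : Matrix (Fin d) (Fin e) ℝ) : ℝ :=
  letI := Matrix.instL2OpNormedAddCommGroup (m := Fin d) (n := Fin e) (𝕜 := ℝ)
  ‖X‖

/-- Entrywise integral over `(0, ∞)` of a matrix-valued function. -/
noncomputable def matIntIoi {a b : Type*} (F : ℝ → Matrix a b ℝ) : Matrix a b ℝ :=
  Matrix.of fun i j => ∫ t in Set.Ioi (0:ℝ), F t i j

/-- Entrywise integrability over `(0, ∞)` of a matrix-valued function. -/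
def MatIntegrableIoi {a b : Type*} (F : ℝ → Matrix a b ℝ) : Prop :=
  ∀ i j, MeasureTheory.IntegrableOn (fun t => F t i j) (Set.Ioi 0)

/-- Kronecker product of two vectors in `ℝ^m`, an element of `ℝ^{m²}`. -/
def kron {m : ℕ} (a b : Fin m → ℝ) : Fin m × Fin m → ℝ := fun p => a p.1 * b p.2

/-- Vectorization of an `m × m` matrix as an element of `ℝ^{m²}`. -/
def vecm {m : ℕ} (X : Matrix (Fin m) (Fin m) ℝ) : Fin m × Fin m → ℝ := fun p => X p.1 p.2

/-- Squared Euclidean norm of a vector. -/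
def enormSq {ι : Type*} [Fintype ι] (v : ι → ℝ) : ℝ := ∑ i, (v i) ^ 2

/-- Euclidean inner product of two vectors. -/
def dotv {ι : Type*} [Fintype ι] (v w : ι → ℝ) : ℝ := ∑ i, v i * w i

open Filter Asymptotics Real

section Entrywise

variable {a b c d : Type*}

/-- Matrices carry no canonical norm, so derivatives are taken entry by entry, like the
integrals `matIntIoi`. -/
def HasEntrywiseDerivAt (F : ℝ → Matrix a b ℝ) (F' : Matrix a b ℝ) (t : ℝ) : Prop :=
  ∀ i j, HasDerivAt (fun s => F s i j) (F' i j) t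

theorem hasEntrywiseDerivAt_const (U : Matrix a b ℝ) (t : ℝ) :
    HasEntrywiseDerivAt (fun _ => U) 0 t :=
  fun _ _ => hasDerivAt_const t _

namespace HasEntrywiseDerivAt

variable {F : ℝ → Matrix a b ℝ} {F' : Matrix a b ℝ} {t : ℝ}

theorem transpose (hF : HasEntrywiseDerivAt F F' t) :
    HasEntrywiseDerivAt (fun s => (F s)ᵀ) F'ᵀ t :=
  fun i j => hF j i

theorem mul [Fintype b] {G : ℝ → Matrix b c ℝ} {G' : Matrix b c ℝ}
    (hF : HasEntrywiseDerivAt F F' t) (hG : HasEntrywiseDerivAt G G' t) :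
    HasEntrywiseDerivAt (fun s => F s * G s) (F' * G t + F t * G') t := by
  intro i j
  simp only [Matrix.mul_apply, Matrix.add_apply, ← Finset.sum_add_distrib]
  exact HasDerivAt.fun_sum fun k _ => (hF i k).mul (hG k j)

theorem const_mul_mul [Fintype a] [Fintype b] (U : Matrix c a ℝ) (V : Matrix b d ℝ)
    (hF : HasEntrywiseDerivAt F F' t) :
    HasEntrywiseDerivAt (fun s => U * F s * V) (U * F' * V) t := by
  simpa using ((hasEntrywiseDerivAt_const U t).mul hF).mul (hasEntrywiseDerivAt_const V t)

theorem transpose_mul_mul [Fintype a] (K : Matrix a a ℝ) (hF : HasEntrywiseDerivAt F F' t) :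
    HasEntrywiseDerivAt (fun s => (F s)ᵀ * K * F s) (F'ᵀ * K * F t + (F t)ᵀ * K * F') t := by
  simpa using (hF.transpose.mul (hasEntrywiseDerivAt_const K t)).mul hF

theorem fromBlocks {F₁₁ : ℝ → Matrix a c ℝ} {F₁₂ : ℝ → Matrix a d ℝ}
    {F₂₁ : ℝ → Matrix b c ℝ} {F₂₂ : ℝ → Matrix b d ℝ} {F₁₁' F₁₂' F₂₁' F₂₂'}
    (h₁₁ : HasEntrywiseDerivAt F₁₁ F₁₁' t) (h₁₂ : HasEntrywiseDerivAt F₁₂ F₁₂' t)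
    (h₂₁ : HasEntrywiseDerivAt F₂₁ F₂₁' t) (h₂₂ : HasEntrywiseDerivAt F₂₂ F₂₂' t) :
    HasEntrywiseDerivAt (fun s => Matrix.fromBlocks (F₁₁ s) (F₁₂ s) (F₂₁ s) (F₂₂ s))
      (Matrix.fromBlocks F₁₁' F₁₂' F₂₁' F₂₂') t := by
  rintro (i | i) (j | j)
  exacts [h₁₁ i j, h₁₂ i j, h₂₁ i j, h₂₂ i j]

end HasEntrywiseDerivAt

theorem continuous_of_hasEntrywiseDerivAt {F : ℝ → Matrix a b ℝ} {F' : ℝ → Matrix a b ℝ}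
    (hF : ∀ t, HasEntrywiseDerivAt F (F' t) t) : Continuous F :=
  continuous_matrix fun i j => continuous_iff_continuousAt.2 fun t => (hF t i j).continuousAt

end Entrywise

section Integral

variable {a b c d : Type*}

theorem MatIntegrableIoi.add {F G : ℝ → Matrix a b ℝ} (hF : MatIntegrableIoi F)
    (hG : MatIntegrableIoi G) : MatIntegrableIoi fun t => F t + G t :=
  fun i j => (hF i j).add (hG i j)

theorem MatIntegrableIoi.const_mul_mul [Fintype a] [Fintype b] {F : ℝ → Matrix a b ℝ}
    (hF : MatIntegrableIoi F) (U : Matrix c a ℝ) (V : Matrix b d ℝ) :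
    MatIntegrableIoi fun t => U * F t * V := by
  intro i j
  simp only [Matrix.mul_apply, Finset.sum_mul]
  exact integrable_finsetSum _ fun l _ => integrable_finsetSum _ fun k _ =>
    ((hF k l).const_mul (U i k)).mul_const (V l j)

theorem matIntIoi_add {F G : ℝ → Matrix a b ℝ} (hF : MatIntegrableIoi F)
    (hG : MatIntegrableIoi G) : matIntIoi (fun t => F t + G t) = matIntIoi F + matIntIoi G := by
  ext i j
  exact integral_add (hF i j) (hG i j)

theorem const_mul_matIntIoi_mul [Fintype a] [Fintype b] {F : ℝ → Matrix a b ℝ}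
    (hF : MatIntegrableIoi F) (U : Matrix c a ℝ) (V : Matrix b d ℝ) :
    U * matIntIoi F * V = matIntIoi fun t => U * F t * V := by
  ext i j
  simp only [matIntIoi, Matrix.mul_apply, Matrix.of_apply, Finset.sum_mul]
  rw [integral_finsetSum _ fun l _ => integrable_finsetSum _ fun k _ =>
    ((hF k l).const_mul (U i k)).mul_const (V l j)]
  refine Finset.sum_congr rfl fun l _ => ?_
  rw [integral_finsetSum _ fun k _ => ((hF k l).const_mul (U i k)).mul_const (V l j)]
  simp only [integral_mul_const, integral_const_mul]

theorem matIntIoi_eq_neg_of_hasEntrywiseDerivAt {S S' : ℝ → Matrix a b ℝ}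
    (hS : ∀ t, 0 ≤ t → HasEntrywiseDerivAt S (S' t) t) (hS' : MatIntegrableIoi S')
    (hlim : ∀ i j, Tendsto (fun t => S t i j) atTop (nhds 0)) :
    matIntIoi S' = -S 0 := by
  ext i j
  simpa [matIntIoi] using integral_Ioi_of_hasDerivAt_of_tendsto' (fun t ht => hS t ht i j) (hS' i j)
    (hlim i j)

theorem MatIntegrableIoi.of_isBigO_exp_neg {F : ℝ → Matrix a b ℝ} {β : ℝ} (hβ : 0 < β)
    (hF : Continuous F) (hdecay : ∀ i j, (fun t => F t i j) =O[atTop] fun t => exp (-β * t)) :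
    MatIntegrableIoi F :=
  fun i j => integrable_of_isBigO_exp_neg hβ (hF.matrix_elem i j).continuousOn (hdecay i j)

end Integral

section BigO

variable {α a b c d : Type*} {l : Filter α}

theorem isBigO_mul_apply [Fintype b] {F : α → Matrix a b ℝ} {G : α → Matrix b c ℝ}
    {f g : α → ℝ} (hF : ∀ i k, (fun x => F x i k) =O[l] f)
    (hG : ∀ k j, (fun x => G x k j) =O[l] g) :
    ∀ i j, (fun x => (F x * G x) i j) =O[l] fun x => f x * g x := by
  intro i j
  simp only [Matrix.mul_apply]
  exact IsBigO.fun_sum fun k _ => (hF i k).mul (hG k j)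

theorem isBigO_const_mul_apply [Fintype a] {F : α → Matrix a b ℝ} {f : α → ℝ}
    (hF : ∀ i j, (fun x => F x i j) =O[l] f) (U : Matrix c a ℝ) :
    ∀ i j, (fun x => (U * F x) i j) =O[l] f := by
  intro i j
  simp only [Matrix.mul_apply]
  exact IsBigO.fun_sum fun k _ => (hF k j).const_mul_left (U i k)

theorem isBigO_mul_const_apply [Fintype b] {F : α → Matrix a b ℝ} {f : α → ℝ}
    (hF : ∀ i j, (fun x => F x i j) =O[l] f) (V : Matrix b c ℝ) :
    ∀ i j, (fun x => (F x * V) i j) =O[l] f := by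
  intro i j
  simp only [Matrix.mul_apply]
  exact IsBigO.fun_sum fun k _ => by simpa only [mul_comm] using (hF i k).const_mul_left (V k j)

theorem isBigO_const_mul_mul_apply [Fintype a] [Fintype b] {F : α → Matrix a b ℝ}
    {f : α → ℝ} (hF : ∀ i j, (fun x => F x i j) =O[l] f) (U : Matrix c a ℝ) (V : Matrix b d ℝ) :
    ∀ i j, (fun x => (U * F x * V) i j) =O[l] f :=
  isBigO_mul_const_apply (isBigO_const_mul_apply hF U) V

theorem isBigO_transpose_mul_mul_apply [Fintype a] {F : α → Matrix a b ℝ} {f : α → ℝ}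
    (hF : ∀ i j, (fun x => F x i j) =O[l] f) (K : Matrix a a ℝ) :
    ∀ i j, (fun x => ((F x)ᵀ * K * F x) i j) =O[l] fun x => f x * f x :=
  isBigO_mul_apply (isBigO_mul_const_apply (fun i j => hF j i) K) hF

theorem isBigO_fromBlocks_apply {F₁₁ : α → Matrix a c ℝ} {F₁₂ : α → Matrix a d ℝ}
    {F₂₁ : α → Matrix b c ℝ} {F₂₂ : α → Matrix b d ℝ} {f : α → ℝ}
    (h₁₁ : ∀ i j, (fun x => F₁₁ x i j) =O[l] f) (h₁₂ : ∀ i j, (fun x => F₁₂ x i j) =O[l] f)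
    (h₂₁ : ∀ i j, (fun x => F₂₁ x i j) =O[l] f) (h₂₂ : ∀ i j, (fun x => F₂₂ x i j) =O[l] f) :
    ∀ i j, (fun x => Matrix.fromBlocks (F₁₁ x) (F₁₂ x) (F₂₁ x) (F₂₂ x) i j) =O[l] f := by
  rintro (i | i) (j | j)
  exacts [h₁₁ i j, h₁₂ i j, h₂₁ i j, h₂₂ i j]

end BigO

section Lyapunov

variable {a b c : Type*} [Fintype a] {F : ℝ → Matrix a b ℝ} {β : ℝ}

theorem tendsto_exp_neg_mul_atTop (hβ : 0 < β) :
    Tendsto (fun t => exp (-β * t)) atTop (nhds 0) :=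
  tendsto_exp_atBot.comp (tendsto_id.const_mul_atTop_of_neg (neg_neg_of_pos hβ))

theorem MatIntegrableIoi.transpose_mul_mul_of_isBigO (hβ : 0 < β) (hF : Continuous F)
    (hdecay : ∀ i j, (fun t => F t i j) =O[atTop] fun t => exp (-β * t)) (K : Matrix a a ℝ) :
    MatIntegrableIoi fun t => (F t)ᵀ * K * F t := by
  refine MatIntegrableIoi.of_isBigO_exp_neg (mul_pos two_pos hβ)
    ((hF.matrix_transpose.matrix_mul continuous_const).matrix_mul hF) fun i j => ?_
  refine (isBigO_transpose_mul_mul_apply hdecay K i j).congr_right fun t => ?_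
  rw [← exp_add]
  ring_nf

theorem lyapunov_of_hasEntrywiseDerivAt [Fintype b] (hβ : 0 < β) (hF : Continuous F)
    (hdecay : ∀ i j, (fun t => F t i j) =O[atTop] fun t => exp (-β * t))
    {E A : Matrix b c ℝ} (hderiv : ∀ t, 0 ≤ t → HasEntrywiseDerivAt (fun s => F s * E) (F t * A) t)
    (K : Matrix a a ℝ) :
    Eᵀ * matIntIoi (fun t => (F t)ᵀ * K * F t) * A + Aᵀ * matIntIoi (fun t => (F t)ᵀ * K * F t) * E
      = -((F 0 * E)ᵀ * K * (F 0 * E)) := by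
  have hQ := MatIntegrableIoi.transpose_mul_mul_of_isBigO hβ hF hdecay K
  rw [const_mul_matIntIoi_mul hQ, const_mul_matIntIoi_mul hQ,
    ← matIntIoi_add (hQ.const_mul_mul _ _) (hQ.const_mul_mul _ _)]
  refine matIntIoi_eq_neg_of_hasEntrywiseDerivAt (S := fun t => (F t * E)ᵀ * K * (F t * E))
    (fun t ht => ?_) ((hQ.const_mul_mul _ _).add (hQ.const_mul_mul _ _)) fun i j => ?_
  · convert (hderiv t ht).transpose_mul_mul K using 1
    simp only [Matrix.transpose_mul, Matrix.mul_assoc, add_comm]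
  · have hexp := tendsto_exp_neg_mul_atTop hβ
    exact (isBigO_transpose_mul_mul_apply (isBigO_mul_const_apply hdecay E) K i j).trans_tendsto
      (by simpa using hexp.mul hexp)

end Lyapunov

theorem abs_apply_le_opNorm {d e : ℕ} (X : Matrix (Fin d) (Fin e) ℝ) (i : Fin d) (j : Fin e) :
    |X i j| ≤ opNorm X := by
  let _ := Matrix.instL2OpNormedAddCommGroup (m := Fin d) (n := Fin e) (𝕜 := ℝ)
  have hcol := Matrix.l2_opNorm_mulVec X (EuclideanSpace.single j 1)
  rw [PiLp.norm_single, norm_one, mul_one] at hcol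
  refine le_trans (le_of_eq ?_) ((PiLp.norm_apply_le _ i).trans hcol)
  simp [Matrix.mulVec_single]

theorem hasEntrywiseDerivAt_mexp_smul {d : ℕ} (J : Matrix (Fin d) (Fin d) ℝ) (t : ℝ) :
    HasEntrywiseDerivAt (fun s => mexp (s • J)) (mexp (t • J) * J) t := by
  -- `mexp` is norm-independent; any normed-algebra structure yields the derivative.
  let _ := Matrix.linftyOpNormedRing (n := Fin d) (α := ℝ)
  let _ := Matrix.linftyOpNormedAlgebra (n := Fin d) (R := ℝ) (α := ℝ)
  intro i j
  exact (Matrix.entryLinearMap ℝ ℝ i j).toContinuousLinearMap.hasFDerivAt.comp_hasDerivAt t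
    (hasDerivAt_exp_smul_const J t)

theorem isBigO_mexp_smul_apply {d : ℕ} {J : Matrix (Fin d) (Fin d) ℝ} {C α : ℝ}
    (hJ : ∀ t : ℝ, 0 ≤ t → opNorm (mexp (t • J)) ≤ C * exp (-α * t)) :
    ∀ i j, (fun t => mexp (t • J) i j) =O[atTop] fun t => exp (-α * t) := by
  intro i j
  refine IsBigO.of_bound C ?_
  filter_upwards [eventually_ge_atTop 0] with t ht
  rw [Real.norm_eq_abs, Real.norm_of_nonneg (exp_pos _).le]
  exact (abs_apply_le_opNorm _ i j).trans (hJ t ht)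

theorem mul_mul_mul_mul_mul_cancel_of_mul_eq_one {a b c e f : Type*} [Fintype b] [Fintype c]
    [Fintype e] [DecidableEq c] {V' : Matrix c e ℝ} {V : Matrix e c ℝ} (hV : V' * V = 1)
    (U : Matrix a b ℝ) (X : Matrix b c ℝ) (Y : Matrix c c ℝ) (R : Matrix c f ℝ) :
    U * X * V' * (V * Y * R) = U * (X * Y) * R := by
  simp only [Matrix.mul_assoc]
  rw [← Matrix.mul_assoc V', hV, Matrix.one_mul]

section WeierstrassForm

variable {nf ni : ℕ} {Winv Tinv : Matrix (Fin nf ⊕ Fin ni) (Fin nf ⊕ Fin ni) ℝ}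
  {J : Matrix (Fin nf) (Fin nf) ℝ} {FJ : ℝ → Matrix (Fin nf ⊕ Fin ni) (Fin nf ⊕ Fin ni) ℝ}

theorem hasEntrywiseDerivAt_fromBlocks_mexp_smul (t : ℝ) :
    HasEntrywiseDerivAt
      (fun s => (fromBlocks (mexp (s • J)) 0 0 0 : Matrix (Fin nf ⊕ Fin ni) (Fin nf ⊕ Fin ni) ℝ))
      (fromBlocks (mexp (t • J) * J) 0 0 0) t :=
  (hasEntrywiseDerivAt_mexp_smul J t).fromBlocks (hasEntrywiseDerivAt_const 0 t)
    (hasEntrywiseDerivAt_const 0 t) (hasEntrywiseDerivAt_const 0 t)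

theorem continuous_of_eq_fromBlocks_mexp_smul
    (hFJ : ∀ t : ℝ, FJ t = Tinv * fromBlocks (mexp (t • J)) 0 0 0 * Winv) : Continuous FJ := by
  rw [funext hFJ]
  exact (continuous_const.matrix_mul
    (continuous_of_hasEntrywiseDerivAt hasEntrywiseDerivAt_fromBlocks_mexp_smul)).matrix_mul
    continuous_const

theorem isBigO_apply_of_eq_fromBlocks_mexp_smul {C α : ℝ}
    (hJ : ∀ t : ℝ, 0 ≤ t → opNorm (mexp (t • J)) ≤ C * exp (-α * t))
    (hFJ : ∀ t : ℝ, FJ t = Tinv * fromBlocks (mexp (t • J)) 0 0 0 * Winv) :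
    ∀ i j, (fun t => FJ t i j) =O[atTop] fun t => exp (-α * t) := by
  have hzero {p q : ℕ} : ∀ i j,
      (fun _ : ℝ => (0 : Matrix (Fin p) (Fin q) ℝ) i j) =O[atTop] fun t => exp (-α * t) :=
    fun _ _ => isBigO_zero _ _
  simp_rw [hFJ]
  exact isBigO_const_mul_mul_apply
    (isBigO_fromBlocks_apply (isBigO_mexp_smul_apply hJ) hzero hzero hzero) Tinv Winv

end WeierstrassForm

theorem improper_proper_observability_gramian_general
    {nf ni : ℕ}
    -- Weierstraß canonical form data for the full-order system
    (W T Winv Tinv : Matrix (Fin nf ⊕ Fin ni) (Fin nf ⊕ Fin ni) ℝ)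
    (hW' : Winv * W = 1)
    (J : Matrix (Fin nf) (Fin nf) ℝ) (N : Matrix (Fin ni) (Fin ni) ℝ)
    (C α : ℝ) (hα : 0 < α)
    (hJ : ∀ t : ℝ, 0 ≤ t → opNorm (mexp (t • J)) ≤ C * Real.exp (-α * t))
    (E A : Matrix (Fin nf ⊕ Fin ni) (Fin nf ⊕ Fin ni) ℝ)
    (hE : E = W * fromBlocks 1 0 0 N * T)
    (hA : A = W * fromBlocks J 0 0 1 * T)
    (M : Matrix (Fin nf ⊕ Fin ni) (Fin nf ⊕ Fin ni) ℝ)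
    -- spectral projectors
    (Pr Pl : Matrix (Fin nf ⊕ Fin ni) (Fin nf ⊕ Fin ni) ℝ)
    (hPr : Pr = Tinv * fromBlocks 1 0 0 0 * T)
    (hPl : Pl = W * fromBlocks 1 0 0 0 * Winv)
    -- fundamental solution matrices
    (FJ : ℝ → Matrix (Fin nf ⊕ Fin ni) (Fin nf ⊕ Fin ni) ℝ)
    (hFJ : ∀ t : ℝ, FJ t = Tinv * fromBlocks (mexp (t • J)) 0 0 0 * Winv)
    -- proper and improper controllability Gramians
    (Pimp : Matrix (Fin nf ⊕ Fin ni) (Fin nf ⊕ Fin ni) ℝ)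
    -- the improper-proper observability Gramian
    (Qip : Matrix (Fin nf ⊕ Fin ni) (Fin nf ⊕ Fin ni) ℝ)
    (hQip : Qip = matIntIoi fun t => (FJ t)ᵀ * M * Pimp * M * FJ t) :
    MatIntegrableIoi (fun t => (FJ t)ᵀ * M * Pimp * M * FJ t) ∧
      Eᵀ * Qip * A + Aᵀ * Qip * E = -(Prᵀ * M * Pimp * M * Pr) ∧
      Qip = Plᵀ * Qip * Pl := by
  have hFJE : ∀ t, FJ t * E = Tinv * fromBlocks (mexp (t • J)) 0 0 0 * T := fun t => by
    rw [hFJ, hE, mul_mul_mul_mul_mul_cancel_of_mul_eq_one hW']; simp [fromBlocks_multiply]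
  have hFJA : ∀ t, FJ t * A = Tinv * fromBlocks (mexp (t • J) * J) 0 0 0 * T := fun t => by
    rw [hFJ, hA, mul_mul_mul_mul_mul_cancel_of_mul_eq_one hW']; simp [fromBlocks_multiply]
  have hFJPl : ∀ t, FJ t * Pl = FJ t := fun t => by
    rw [hFJ, hPl, mul_mul_mul_mul_mul_cancel_of_mul_eq_one hW']; simp [fromBlocks_multiply]
  have hFJ0E : FJ 0 * E = Pr := by
    rw [hFJE, hPr, zero_smul, mexp, NormedSpace.exp_zero]
  have hcont := continuous_of_eq_fromBlocks_mexp_smul hFJ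
  have hdecay := isBigO_apply_of_eq_fromBlocks_mexp_smul hJ hFJ
  have hderiv : ∀ t, 0 ≤ t → HasEntrywiseDerivAt (fun s => FJ s * E) (FJ t * A) t := by
    intro t _
    simp_rw [hFJE, hFJA]
    exact (hasEntrywiseDerivAt_fromBlocks_mexp_smul t).const_mul_mul Tinv T
  have hQ : (fun t => (FJ t)ᵀ * M * Pimp * M * FJ t)
      = fun t => (FJ t)ᵀ * (M * Pimp * M) * FJ t := by
    simp only [Matrix.mul_assoc]
  have hint := MatIntegrableIoi.transpose_mul_mul_of_isBigO hα hcont hdecay (M * Pimp * M)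
  refine ⟨hQ ▸ hint, ?_, ?_⟩
  · rw [hQip, hQ, lyapunov_of_hasEntrywiseDerivAt hα hcont hdecay hderiv, hFJ0E]
    simp only [Matrix.mul_assoc]
  · have hconj : ∀ t, Plᵀ * ((FJ t)ᵀ * (M * Pimp * M) * FJ t) * Pl
        = (FJ t * Pl)ᵀ * (M * Pimp * M) * (FJ t * Pl) := fun t => by
      simp only [Matrix.transpose_mul, Matrix.mul_assoc]
    rw [hQip, hQ, const_mul_matIntIoi_mul hint]
    simp only [hconj, hFJPl]

/-- The improper-proper observability Gramian
`Q_ip = ∫₀^∞ F_J(t)ᵀ·M·P_i·M·F_J(t) dt` is well defined and solves the projected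
continuous-time Lyapunov equation `Eᵀ·Q_ip·A + Aᵀ·Q_ip·E = −P_rᵀ·M·P_i·M·P_r` together with
`Q_ip = P_lᵀ·Q_ip·P_l`. -/
theorem improper_proper_observability_gramian
    {nf ni m : ℕ} (hm : 0 < m) (ν : ℕ) (hν : 0 < ν)
    -- Weierstraß canonical form data for the full-order system
    (W T Winv Tinv : Matrix (Fin nf ⊕ Fin ni) (Fin nf ⊕ Fin ni) ℝ)
    (hW : W * Winv = 1) (hW' : Winv * W = 1)
    (hT : T * Tinv = 1) (hT' : Tinv * T = 1)
    (J : Matrix (Fin nf) (Fin nf) ℝ) (N : Matrix (Fin ni) (Fin ni) ℝ) (hN : N ^ ν = 0)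
    (C α : ℝ) (hC : 0 < C) (hα : 0 < α)
    (hJ : ∀ t : ℝ, 0 ≤ t → opNorm (mexp (t • J)) ≤ C * Real.exp (-α * t))
    (E A : Matrix (Fin nf ⊕ Fin ni) (Fin nf ⊕ Fin ni) ℝ)
    (hE : E = W * fromBlocks 1 0 0 N * T)
    (hA : A = W * fromBlocks J 0 0 1 * T)
    (B : Matrix (Fin nf ⊕ Fin ni) (Fin m) ℝ)
    (M : Matrix (Fin nf ⊕ Fin ni) (Fin nf ⊕ Fin ni) ℝ) (hM : M.IsSymm)
    -- spectral projectors
    (Pr Pl : Matrix (Fin nf ⊕ Fin ni) (Fin nf ⊕ Fin ni) ℝ)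
    (hPr : Pr = Tinv * fromBlocks 1 0 0 0 * T)
    (hPl : Pl = W * fromBlocks 1 0 0 0 * Winv)
    -- fundamental solution matrices
    (FJ : ℝ → Matrix (Fin nf ⊕ Fin ni) (Fin nf ⊕ Fin ni) ℝ)
    (hFJ : ∀ t : ℝ, FJ t = Tinv * fromBlocks (mexp (t • J)) 0 0 0 * Winv)
    (FN : ℕ → Matrix (Fin nf ⊕ Fin ni) (Fin nf ⊕ Fin ni) ℝ)
    (hFN : ∀ k : ℕ, FN k = Tinv * fromBlocks 0 0 0 (-(N ^ k)) * Winv)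
    -- proper and improper controllability Gramians
    (Pp : Matrix (Fin nf ⊕ Fin ni) (Fin nf ⊕ Fin ni) ℝ)
    (hPp : Pp = matIntIoi fun t => FJ t * B * Bᵀ * (FJ t)ᵀ)
    (Pimp : Matrix (Fin nf ⊕ Fin ni) (Fin nf ⊕ Fin ni) ℝ)
    (hPimp : Pimp = ∑ k ∈ Finset.range ν, FN k * B * Bᵀ * (FN k)ᵀ)
    -- the improper-proper observability Gramian
    (Qip : Matrix (Fin nf ⊕ Fin ni) (Fin nf ⊕ Fin ni) ℝ)
    (hQip : Qip = matIntIoi fun t => (FJ t)ᵀ * M * Pimp * M * FJ t) :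
    MatIntegrableIoi (fun t => (FJ t)ᵀ * M * Pimp * M * FJ t) ∧
      Eᵀ * Qip * A + Aᵀ * Qip * E = -(Prᵀ * M * Pimp * M * Pr) ∧
      Qip = Plᵀ * Qip * Pl :=
  improper_proper_observability_gramian_general W T Winv Tinv hW' J N C α hα hJ E A hE hA M Pr Pl
    hPr hPl FJ hFJ Pimp Qip hQip
end

section
/- For every t ≥ 0 the improper-proper output error satisfies |y_ip(t) − ŷ_ip(t)| ≤ (∫₀^∞ Σ_{k=0}^{ν−1} ‖h_ip(s,k) − ĥ_ip(s,k)‖₂² ds)^{1/2} · (∫₀ᵗ Σ_{k=0}^{ν−1} ‖u(τ) ⊗ u^{(k)}(t)‖₂² dτ)^{1/2}. -/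
open MeasureTheory Matrix

/-!
The output error is a convolution over `(0, t]` of the kernel difference `h_ip − ĥ_ip` against
the input products `u(τ) ⊗ u⁽ᵏ⁾(t)`. Cauchy–Schwarz, first over `k` and the `m²` coordinates and
then in `τ`, bounds it by the `L²` norms of the reflected kernel difference on `(0, t]` and of the
input term; reflecting `τ ↦ t − τ` and enlarging `(0, t]` to `(0, ∞)` gives the kernel factor.
That factor is finite because every kernel entry is a fixed linear functional of `exp(sJ)`
(resp. `exp(sÂ₁)`), hence decays exponentially.
-/

open Set Real

lemma enormSq_nonneg {ι : Type*} [Fintype ι] (v : ι → ℝ) : 0 ≤ enormSq v :=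
  Finset.sum_nonneg fun i _ => sq_nonneg (v i)

lemma sum_dotv_sub_sum_dotv {κ ι : Type*} [Fintype ι] (s : Finset κ) (e f v : κ → ι → ℝ) :
    ∑ k ∈ s, dotv (e k) (v k) - ∑ k ∈ s, dotv (f k) (v k) = ∑ k ∈ s, dotv (e k - f k) (v k) := by
  simp only [dotv, Pi.sub_apply, sub_mul, Finset.sum_sub_distrib]

lemma abs_sum_dotv_le {κ ι : Type*} [Fintype ι] (s : Finset κ) (e v : κ → ι → ℝ) :
    |∑ k ∈ s, dotv (e k) (v k)| ≤
      √(∑ k ∈ s, enormSq (e k)) * √(∑ k ∈ s, enormSq (v k)) := by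
  have h := Real.sum_mul_le_sqrt_mul_sqrt (s ×ˢ Finset.univ)
    (fun x => |e x.1 x.2|) (fun x => |v x.1 x.2|)
  simp only [sq_abs, ← abs_mul, Finset.sum_product] at h
  exact ((Finset.abs_sum_le_sum_abs _ _).trans
    (Finset.sum_le_sum fun k _ => Finset.abs_sum_le_sum_abs _ _)).trans h

section Holder

variable {α : Type*} [MeasurableSpace α] {μ : Measure α} {F G : α → ℝ}

lemma memLp_two_sqrt (hF : Integrable F μ) (hF0 : 0 ≤ F) : MemLp (fun x => √(F x)) 2 μ := by
  refine (memLp_two_iff_integrable_sq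
    (continuous_sqrt.comp_aestronglyMeasurable hF.aestronglyMeasurable)).2 ?_
  simpa only [sq_sqrt (hF0 _)] using hF

lemma integral_sqrt_mul_sqrt_le (hF : Integrable F μ) (hG : Integrable G μ)
    (hF0 : 0 ≤ F) (hG0 : 0 ≤ G) :
    ∫ x, √(F x) * √(G x) ∂μ ≤ √(∫ x, F x ∂μ) * √(∫ x, G x ∂μ) := by
  have h := integral_mul_le_Lp_mul_Lq_of_nonneg Real.HolderConjugate.two_two
    (Filter.Eventually.of_forall fun x => sqrt_nonneg (F x))
    (Filter.Eventually.of_forall fun x => sqrt_nonneg (G x))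
    (by simpa using memLp_two_sqrt hF hF0) (by simpa using memLp_two_sqrt hG hG0)
  simpa only [rpow_two, sq_sqrt (hF0 _), sq_sqrt (hG0 _), ← sqrt_eq_rpow] using h

end Holder

lemma abs_setIntegral_Ioc_le_of_le_sqrt_mul_sqrt {F G g : ℝ → ℝ} {t : ℝ} (ht : 0 ≤ t)
    (hF : IntegrableOn F (Ioi 0)) (hG : IntegrableOn G (Ioc 0 t)) (hF0 : 0 ≤ F) (hG0 : 0 ≤ G)
    (hg : ∀ τ ∈ Ioc 0 t, |g τ| ≤ √(F (t - τ)) * √(G τ)) :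
    |∫ τ in Ioc 0 t, g τ| ≤ √(∫ s in Ioi 0, F s) * √(∫ τ in Ioc 0 t, G τ) := by
  have hFIoc : IntervalIntegrable F volume 0 t :=
    (intervalIntegrable_iff_integrableOn_Ioc_of_le ht).2 (hF.mono_set Ioc_subset_Ioi_self)
  have hFt : IntegrableOn (fun τ => F (t - τ)) (Ioc 0 t) := by
    have := (hFIoc.comp_sub_left t).symm
    rw [sub_self, sub_zero, intervalIntegrable_iff_integrableOn_Ioc_of_le ht] at this
    exact this
  have hreflect : ∫ τ in Ioc 0 t, F (t - τ) = ∫ s in Ioc 0 t, F s := by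
    rw [← intervalIntegral.integral_of_le ht, ← intervalIntegral.integral_of_le ht,
      intervalIntegral.integral_comp_sub_left F t, sub_self, sub_zero]
  calc |∫ τ in Ioc 0 t, g τ|
      ≤ ∫ τ in Ioc 0 t, √(F (t - τ)) * √(G τ) := by
        rw [← Real.norm_eq_abs]
        exact norm_integral_le_of_norm_le
          ((memLp_two_sqrt hFt fun τ => hF0 (t - τ)).integrable_mul (memLp_two_sqrt hG hG0))
          ((ae_restrict_iff' measurableSet_Ioc).2 (Filter.Eventually.of_forall hg))
    _ ≤ √(∫ τ in Ioc 0 t, F (t - τ)) * √(∫ τ in Ioc 0 t, G τ) :=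
        integral_sqrt_mul_sqrt_le hFt hG (fun τ => hF0 (t - τ)) hG0
    _ ≤ √(∫ s in Ioi 0, F s) * √(∫ τ in Ioc 0 t, G τ) := by
        rw [hreflect]
        exact mul_le_mul_of_nonneg_right (sqrt_le_sqrt (setIntegral_mono_set hF
          (Filter.Eventually.of_forall hF0) Ioc_subset_Ioi_self.eventuallyLE)) (sqrt_nonneg _)

lemma memLp_two_Ioi_of_abs_le_exp {f : ℝ → ℝ} {c α : ℝ} (hf : Continuous f) (hα : 0 < α)
    (hbound : ∀ s, 0 ≤ s → |f s| ≤ c * exp (-α * s)) :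
    MemLp f 2 (volume.restrict (Ioi 0)) := by
  have hexp : MemLp (fun s => c * exp (-α * s)) 2 (volume.restrict (Ioi 0)) := by
    refine (memLp_two_iff_integrable_sq (by fun_prop)).2 ?_
    have hsq : ∀ s, (c * exp (-α * s)) ^ 2 = c ^ 2 * exp (-(2 * α) * s) := fun s => by
      rw [mul_pow, ← exp_nat_mul]; ring_nf
    simp only [hsq]
    exact (exp_neg_integrableOn_Ioi 0 (by positivity)).const_mul _
  refine hexp.of_le hf.aestronglyMeasurable ?_
  refine (ae_restrict_iff' measurableSet_Ioi).2 (Filter.Eventually.of_forall fun s hs => ?_)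
  simp only [Real.norm_eq_abs]
  exact (hbound s (le_of_lt hs)).trans (le_abs_self _)

lemma continuous_mexp_smul {d : ℕ} (J : Matrix (Fin d) (Fin d) ℝ) :
    Continuous fun s : ℝ => mexp (s • J) := by
  -- any normed-algebra norm on matrices induces the product topology, so one may be chosen
  let := Matrix.linftyOpNormedRing (n := Fin d) (α := ℝ)
  let := Matrix.linftyOpNormedAlgebra (n := Fin d) (R := ℝ) (α := ℝ)
  let := NormedAlgebra.restrictScalars ℚ ℝ (Matrix (Fin d) (Fin d) ℝ)
  exact NormedSpace.exp_continuous.comp (continuous_id.smul continuous_const)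

lemma LinearMap.exists_abs_le_mul_opNorm {d e : ℕ} (Φ : Matrix (Fin d) (Fin e) ℝ →ₗ[ℝ] ℝ) :
    ∃ c, 0 ≤ c ∧ ∀ Y, |Φ Y| ≤ c * opNorm Y := by
  let := Matrix.instL2OpNormedAddCommGroup (m := Fin d) (n := Fin e) (𝕜 := ℝ)
  let := Matrix.instL2OpNormedSpace (m := Fin d) (n := Fin e) (𝕜 := ℝ)
  exact ⟨_, norm_nonneg _, (LinearMap.toContinuousLinearMap Φ).le_opNorm⟩

lemma LinearMap.continuous_comp_mexp_smul {d : ℕ} (Φ : Matrix (Fin d) (Fin d) ℝ →ₗ[ℝ] ℝ)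
    (J : Matrix (Fin d) (Fin d) ℝ) : Continuous fun s : ℝ => Φ (mexp (s • J)) :=
  Φ.continuous_of_finiteDimensional.comp (continuous_mexp_smul J)

lemma LinearMap.memLp_two_comp_mexp_smul {d : ℕ} (Φ : Matrix (Fin d) (Fin d) ℝ →ₗ[ℝ] ℝ)
    {J : Matrix (Fin d) (Fin d) ℝ} {C α : ℝ} (hα : 0 < α)
    (hJ : ∀ t : ℝ, 0 ≤ t → opNorm (mexp (t • J)) ≤ C * exp (-α * t)) :
    MemLp (fun s : ℝ => Φ (mexp (s • J))) 2 (volume.restrict (Ioi 0)) := by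
  obtain ⟨c, hc0, hc⟩ := Φ.exists_abs_le_mul_opNorm
  refine memLp_two_Ioi_of_abs_le_exp (c := c * C)
    (Φ.continuous_comp_mexp_smul J) hα fun s hs => ?_
  calc |Φ (mexp (s • J))| ≤ c * opNorm (mexp (s • J)) := hc _
    _ ≤ c * (C * exp (-α * s)) := by gcongr; exact hJ s hs
    _ = c * C * exp (-α * s) := by ring

def blockCornerEntry {ι κ a b : Type*} [Fintype a] [Fintype b]
    (L : Matrix ι (a ⊕ b) ℝ) (R : Matrix (a ⊕ b) κ ℝ) (i : ι) (j : κ) :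
    Matrix a a ℝ →ₗ[ℝ] ℝ where
  toFun Y := (L * fromBlocks Y 0 0 (0 : Matrix b b ℝ) * R) i j
  map_add' Y Z := by
    rw [← Matrix.add_apply, ← Matrix.add_mul, ← Matrix.mul_add, fromBlocks_add, add_zero, add_zero,
      add_zero]
  map_smul' c Y := by
    rw [RingHom.id_apply, ← Matrix.smul_apply, ← Matrix.smul_mul, ← Matrix.mul_smul,
      fromBlocks_smul, smul_zero, smul_zero, smul_zero]

section Convolution

variable {κ ι : Type*} [Fintype ι] (s : Finset κ) {a b v : ℝ → κ → ι → ℝ}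

lemma continuous_sum_dotv_comp_sub (t : ℝ) (ha : ∀ k i, Continuous fun x => a x k i)
    (hv : ∀ k i, Continuous fun τ => v τ k i) :
    Continuous fun τ => ∑ k ∈ s, dotv (a (t - τ) k) (v τ k) :=
  continuous_finsetSum _ fun k _ => continuous_finsetSum _ fun i _ =>
    ((ha k i).comp (continuous_sub_left t)).mul (hv k i)

lemma integrableOn_Ioi_sum_enormSq_sub
    (ha : ∀ k i, MemLp (fun x => a x k i) 2 (volume.restrict (Ioi 0)))
    (hb : ∀ k i, MemLp (fun x => b x k i) 2 (volume.restrict (Ioi 0))) :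
    IntegrableOn (fun x => ∑ k ∈ s, enormSq (a x k - b x k)) (Ioi 0) :=
  integrable_finsetSum _ fun k _ => integrable_finsetSum _ fun i _ =>
    (memLp_two_iff_integrable_sq ((ha k i).sub (hb k i)).aestronglyMeasurable).1
      ((ha k i).sub (hb k i))

lemma abs_convolution_sub_convolution_le {t : ℝ} (ht : 0 ≤ t)
    (ha : ∀ k i, Continuous fun x => a x k i) (hb : ∀ k i, Continuous fun x => b x k i)
    (hv : ∀ k i, Continuous fun τ => v τ k i)
    (ha2 : ∀ k i, MemLp (fun x => a x k i) 2 (volume.restrict (Ioi 0)))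
    (hb2 : ∀ k i, MemLp (fun x => b x k i) 2 (volume.restrict (Ioi 0))) :
    |(∫ τ in Ioc 0 t, ∑ k ∈ s, dotv (a (t - τ) k) (v τ k)) -
        ∫ τ in Ioc 0 t, ∑ k ∈ s, dotv (b (t - τ) k) (v τ k)| ≤
      √(∫ x in Ioi 0, ∑ k ∈ s, enormSq (a x k - b x k)) *
        √(∫ τ in Ioc 0 t, ∑ k ∈ s, enormSq (v τ k)) := by
  have hG : Continuous fun τ => ∑ k ∈ s, enormSq (v τ k) :=
    continuous_finsetSum _ fun k _ => continuous_finsetSum _ fun i _ => (hv k i).pow 2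
  rw [← integral_sub (continuous_sum_dotv_comp_sub s t ha hv).integrableOn_Ioc
    (continuous_sum_dotv_comp_sub s t hb hv).integrableOn_Ioc]
  refine abs_setIntegral_Ioc_le_of_le_sqrt_mul_sqrt ht (integrableOn_Ioi_sum_enormSq_sub s ha2 hb2)
    hG.integrableOn_Ioc (fun x => Finset.sum_nonneg fun k _ => enormSq_nonneg _)
    (fun τ => Finset.sum_nonneg fun k _ => enormSq_nonneg _) fun τ _ => ?_
  rw [sum_dotv_sub_sum_dotv]
  exact abs_sum_dotv_le s _ _

end Convolution

theorem improper_proper_output_error_kernel_bound_general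
    {nf ni m : ℕ} (ν : ℕ)
    -- Weierstraß canonical form data for the full-order system
    (Winv Tinv : Matrix (Fin nf ⊕ Fin ni) (Fin nf ⊕ Fin ni) ℝ)
    (J : Matrix (Fin nf) (Fin nf) ℝ)
    (C α : ℝ) (hα : 0 < α)
    (hJ : ∀ t : ℝ, 0 ≤ t → opNorm (mexp (t • J)) ≤ C * Real.exp (-α * t))
    (B : Matrix (Fin nf ⊕ Fin ni) (Fin m) ℝ)
    (M : Matrix (Fin nf ⊕ Fin ni) (Fin nf ⊕ Fin ni) ℝ)
    -- fundamental solution matrices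
    (FJ : ℝ → Matrix (Fin nf ⊕ Fin ni) (Fin nf ⊕ Fin ni) ℝ)
    (hFJ : ∀ t : ℝ, FJ t = Tinv * fromBlocks (mexp (t • J)) 0 0 0 * Winv)
    (FN : ℕ → Matrix (Fin nf ⊕ Fin ni) (Fin nf ⊕ Fin ni) ℝ)
    -- reduced-order data
    {rf ri : ℕ}
    (A1r : Matrix (Fin rf) (Fin rf) ℝ)
    (Cr αr : ℝ) (hαr : 0 < αr)
    (hA1r : ∀ t : ℝ, 0 ≤ t → opNorm (mexp (t • A1r)) ≤ Cr * Real.exp (-αr * t))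
    (Br : Matrix (Fin rf ⊕ Fin ri) (Fin m) ℝ)
    (Mr : Matrix (Fin rf ⊕ Fin ri) (Fin rf ⊕ Fin ri) ℝ)
    (FJr : ℝ → Matrix (Fin rf ⊕ Fin ri) (Fin rf ⊕ Fin ri) ℝ)
    (hFJr : ∀ t : ℝ, FJr t = fromBlocks (mexp (t • A1r)) 0 0 0)
    (FNr : ℕ → Matrix (Fin rf ⊕ Fin ri) (Fin rf ⊕ Fin ri) ℝ)
    -- improper-proper kernels of the full-order and reduced-order systems
    (hip : ℝ → ℕ → Fin m × Fin m → ℝ)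
    (hhip : ∀ (t : ℝ) (k : ℕ), hip t k = vecm (Bᵀ * (FN k)ᵀ * M * FJ t * B))
    (hipr : ℝ → ℕ → Fin m × Fin m → ℝ)
    (hhipr : ∀ (t : ℝ) (k : ℕ), hipr t k = vecm (Brᵀ * (FNr k)ᵀ * Mr * FJr t * Br))
    -- a (ν−1)-times continuously differentiable input, with u and all derivatives
    -- square-integrable and bounded
    (u : ℝ → Fin m → ℝ) (hu : ContDiff ℝ ((ν - 1 : ℕ) : ℕ∞) u)
    -- improper-proper outputs of the full-order and reduced-order systems
    (yip yipr : ℝ → ℝ)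
    (hyip : ∀ t : ℝ, yip t = ∫ τ in Set.Ioc (0:ℝ) t,
      ∑ k ∈ Finset.range ν, dotv (hip (t - τ) k) (kron (u τ) (iteratedDeriv k u t)))
    (hyipr : ∀ t : ℝ, yipr t = ∫ τ in Set.Ioc (0:ℝ) t,
      ∑ k ∈ Finset.range ν, dotv (hipr (t - τ) k) (kron (u τ) (iteratedDeriv k u t)))
    :
    ∀ t : ℝ, 0 ≤ t → |yip t - yipr t| ≤
      Real.sqrt (∫ s in Set.Ioi (0:ℝ), ∑ k ∈ Finset.range ν, enormSq (hip s k - hipr s k)) *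
      Real.sqrt (∫ τ in Set.Ioc (0:ℝ) t, ∑ k ∈ Finset.range ν,
        enormSq (kron (u τ) (iteratedDeriv k u t))) := by
  intro t ht
  have hip_eq : hip = fun s k p =>
      blockCornerEntry (Bᵀ * (FN k)ᵀ * M * Tinv) (Winv * B) p.1 p.2 (mexp (s • J)) := by
    funext s k p
    simp only [hhip, hFJ, vecm, blockCornerEntry, LinearMap.coe_mk, AddHom.coe_mk, Matrix.mul_assoc]
  have hipr_eq : hipr = fun s k p =>
      blockCornerEntry (Brᵀ * (FNr k)ᵀ * Mr) Br p.1 p.2 (mexp (s • A1r)) := by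
    funext s k p
    simp only [hhipr, hFJr, vecm, blockCornerEntry, LinearMap.coe_mk, AddHom.coe_mk]
  rw [hyip, hyipr]
  exact abs_convolution_sub_convolution_le _ ht
    (fun k p => hip_eq ▸ LinearMap.continuous_comp_mexp_smul _ J)
    (fun k p => hipr_eq ▸ LinearMap.continuous_comp_mexp_smul _ A1r)
    (fun k p => ((continuous_apply p.1).comp hu.continuous).mul continuous_const)
    (fun k p => hip_eq ▸ LinearMap.memLp_two_comp_mexp_smul _ hα hJ)
    (fun k p => hipr_eq ▸ LinearMap.memLp_two_comp_mexp_smul _ hαr hA1r)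

/-- For every `t ≥ 0` the improper-proper output error satisfies
`|y_ip(t) − ŷ_ip(t)| ≤ (∫₀^∞ ∑_{k<ν} ‖h_ip(s,k) − ĥ_ip(s,k)‖₂² ds)^{1/2} ·
  (∫₀ᵗ ∑_{k<ν} ‖u(τ) ⊗ u^{(k)}(t)‖₂² dτ)^{1/2}`. -/
theorem improper_proper_output_error_kernel_bound
    {nf ni m : ℕ} (hm : 0 < m) (ν : ℕ) (hν : 0 < ν)
    -- Weierstraß canonical form data for the full-order system
    (W T Winv Tinv : Matrix (Fin nf ⊕ Fin ni) (Fin nf ⊕ Fin ni) ℝ)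
    (hW : W * Winv = 1) (hW' : Winv * W = 1)
    (hT : T * Tinv = 1) (hT' : Tinv * T = 1)
    (J : Matrix (Fin nf) (Fin nf) ℝ) (N : Matrix (Fin ni) (Fin ni) ℝ) (hN : N ^ ν = 0)
    (C α : ℝ) (hC : 0 < C) (hα : 0 < α)
    (hJ : ∀ t : ℝ, 0 ≤ t → opNorm (mexp (t • J)) ≤ C * Real.exp (-α * t))
    (E A : Matrix (Fin nf ⊕ Fin ni) (Fin nf ⊕ Fin ni) ℝ)
    (hE : E = W * fromBlocks 1 0 0 N * T)
    (hA : A = W * fromBlocks J 0 0 1 * T)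
    (B : Matrix (Fin nf ⊕ Fin ni) (Fin m) ℝ)
    (M : Matrix (Fin nf ⊕ Fin ni) (Fin nf ⊕ Fin ni) ℝ) (hM : M.IsSymm)
    -- spectral projectors
    (Pr Pl : Matrix (Fin nf ⊕ Fin ni) (Fin nf ⊕ Fin ni) ℝ)
    (hPr : Pr = Tinv * fromBlocks 1 0 0 0 * T)
    (hPl : Pl = W * fromBlocks 1 0 0 0 * Winv)
    -- fundamental solution matrices
    (FJ : ℝ → Matrix (Fin nf ⊕ Fin ni) (Fin nf ⊕ Fin ni) ℝ)
    (hFJ : ∀ t : ℝ, FJ t = Tinv * fromBlocks (mexp (t • J)) 0 0 0 * Winv)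
    (FN : ℕ → Matrix (Fin nf ⊕ Fin ni) (Fin nf ⊕ Fin ni) ℝ)
    (hFN : ∀ k : ℕ, FN k = Tinv * fromBlocks 0 0 0 (-(N ^ k)) * Winv)
    -- proper and improper controllability Gramians
    (Pp : Matrix (Fin nf ⊕ Fin ni) (Fin nf ⊕ Fin ni) ℝ)
    (hPp : Pp = matIntIoi fun t => FJ t * B * Bᵀ * (FJ t)ᵀ)
    (Pimp : Matrix (Fin nf ⊕ Fin ni) (Fin nf ⊕ Fin ni) ℝ)
    (hPimp : Pimp = ∑ k ∈ Finset.range ν, FN k * B * Bᵀ * (FN k)ᵀ)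
    -- reduced-order data
    {rf ri : ℕ}
    (A1r : Matrix (Fin rf) (Fin rf) ℝ) (E2r : Matrix (Fin ri) (Fin ri) ℝ) (hE2r : E2r ^ ν = 0)
    (Cr αr : ℝ) (hCr : 0 < Cr) (hαr : 0 < αr)
    (hA1r : ∀ t : ℝ, 0 ≤ t → opNorm (mexp (t • A1r)) ≤ Cr * Real.exp (-αr * t))
    (Br : Matrix (Fin rf ⊕ Fin ri) (Fin m) ℝ)
    (Mr : Matrix (Fin rf ⊕ Fin ri) (Fin rf ⊕ Fin ri) ℝ) (hMr : Mr.IsSymm)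
    (FJr : ℝ → Matrix (Fin rf ⊕ Fin ri) (Fin rf ⊕ Fin ri) ℝ)
    (hFJr : ∀ t : ℝ, FJr t = fromBlocks (mexp (t • A1r)) 0 0 0)
    (FNr : ℕ → Matrix (Fin rf ⊕ Fin ri) (Fin rf ⊕ Fin ri) ℝ)
    (hFNr : ∀ k : ℕ, FNr k = fromBlocks 0 0 0 (-(E2r ^ k)))
    -- improper-proper kernels of the full-order and reduced-order systems
    (hip : ℝ → ℕ → Fin m × Fin m → ℝ)
    (hhip : ∀ (t : ℝ) (k : ℕ), hip t k = vecm (Bᵀ * (FN k)ᵀ * M * FJ t * B))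
    (hipr : ℝ → ℕ → Fin m × Fin m → ℝ)
    (hhipr : ∀ (t : ℝ) (k : ℕ), hipr t k = vecm (Brᵀ * (FNr k)ᵀ * Mr * FJr t * Br))
    -- a (ν−1)-times continuously differentiable input, with u and all derivatives
    -- square-integrable and bounded
    (u : ℝ → Fin m → ℝ) (hu : ContDiff ℝ ((ν - 1 : ℕ) : ℕ∞) u)
    (husq : ∀ k < ν,
      MeasureTheory.IntegrableOn (fun τ => enormSq (iteratedDeriv k u τ)) (Set.Ioi 0))
    (hubd : ∀ k < ν, ∃ c : ℝ, ∀ t : ℝ, 0 ≤ t → Real.sqrt (enormSq (iteratedDeriv k u t)) ≤ c)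
    -- improper-proper outputs of the full-order and reduced-order systems
    (yip yipr : ℝ → ℝ)
    (hyip : ∀ t : ℝ, yip t = ∫ τ in Set.Ioc (0:ℝ) t,
      ∑ k ∈ Finset.range ν, dotv (hip (t - τ) k) (kron (u τ) (iteratedDeriv k u t)))
    (hyipr : ∀ t : ℝ, yipr t = ∫ τ in Set.Ioc (0:ℝ) t,
      ∑ k ∈ Finset.range ν, dotv (hipr (t - τ) k) (kron (u τ) (iteratedDeriv k u t)))
    :
    ∀ t : ℝ, 0 ≤ t → |yip t - yipr t| ≤
      Real.sqrt (∫ s in Set.Ioi (0:ℝ), ∑ k ∈ Finset.range ν, enormSq (hip s k - hipr s k)) *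
      Real.sqrt (∫ τ in Set.Ioc (0:ℝ) t, ∑ k ∈ Finset.range ν,
        enormSq (kron (u τ) (iteratedDeriv k u t))) :=
  improper_proper_output_error_kernel_bound_general ν Winv Tinv J C α hα hJ B M FJ hFJ FN A1r Cr αr
    hαr hA1r Br Mr FJr hFJr FNr hip hhip hipr hhipr u hu yip yipr hyip hyipr
end
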